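/- Let n ≥ 2. If T : S^n_+ → S^n_+ is a bijective map that is 1-Lipschitz with respect to the geodesic distance, then T(C) = C, where C = S^n_+ ∩ {x_{n+1} = 0} is the equator. -/

import Mathlib

open MeasureTheory Real

noncomputable section

/-- Euclidean space `ℝ^{n+1}`. -/
abbrev Euc (n : ℕ) := EuclideanSpace ℝ (Fin (n + 1))

/-- The unit sphere `S^n ⊆ ℝ^{n+1}`. -/
def unitSphere (n : ℕ) : Set (Euc n) := Metric.sphere 0 1

/-- The closed upper half-sphere `S^n_+`. -/
def upperHemi (n : ℕ) : Set (Euc n) := {x ∈ unitSphere n | 0 ≤ x (Fin.last n)}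

/-- The equator `C = S^n_+ ∩ {x_{n+1} = 0}`. -/
def equator (n : ℕ) : Set (Euc n) := {x ∈ upperHemi n | x (Fin.last n) = 0}

/-- The geodesic distance on the sphere: `d(x,y) = arccos (x ⬝ y)`. -/
def geod {n : ℕ} (x y : Euc n) : ℝ := Real.arccos (inner ℝ x y)

/-- The north pole `N = (0,…,0,1)`. -/
def northPole (n : ℕ) : Euc n := EuclideanSpace.single (Fin.last n) 1

/-- The uniform probability measure `σ_+` on the upper half-sphere, i.e. the normalized
restriction to `S^n_+` of the `n`-dimensional Hausdorff measure. -/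
def sigmaPlus (n : ℕ) : Measure (Euc n) :=
  ((μH[n] : Measure (Euc n)) (upperHemi n))⁻¹ • (μH[n] : Measure (Euc n)).restrict (upperHemi n)

/-!
A map that is `1`-Lipschitz for `geod` is `1`-Lipschitz for the chordal distance. If `T x` lies
on the equator `C`, its antipode `-T x` lies in `S^n_+`, and a preimage of it is at distance `π`
from `x`, hence equals `-x`; so `x ∈ C`. Thus `D = S^n_+ ∩ T⁻¹(C)` is a closed subset of the
compact set `C` which `T` maps onto `C`. A right inverse `C → D` of `T` is a non-contracting
self-map of `C`; such a map has recurrent orbits, hence dense range, so `D = C`.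
-/

open Set Function
open scoped RealInnerProductSpace

namespace AntilipschitzWith

variable {X : Type*} [PseudoMetricSpace X] {f : X → X}

protected theorem iterate {K : NNReal} (hf : AntilipschitzWith K f) :
    ∀ k, AntilipschitzWith (K ^ k) f^[k]
  | 0 => by simpa using AntilipschitzWith.id
  | k + 1 => by rw [pow_succ', iterate_succ]; exact (hf.iterate k).comp hf

/-- The orbit of `x` has a Cauchy subsequence, and `f^[m]` cannot bring two orbit points
closer than they already are. -/
theorem exists_dist_iterate_lt [CompactSpace X] (hf : AntilipschitzWith 1 f) (x : X)
    {ε : ℝ} (hε : 0 < ε) : ∃ k, 0 < k ∧ dist (f^[k] x) x < ε := by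
  obtain ⟨a, φ, hφ, ha⟩ := SeqCompactSpace.tendsto_subseq fun k => f^[k] x
  obtain ⟨N, hN⟩ := Metric.cauchySeq_iff'.mp ha.cauchySeq ε hε
  have hlt : φ N < φ (N + 1) := hφ N.lt_succ_self
  refine ⟨φ (N + 1) - φ N, by omega, ?_⟩
  calc dist (f^[φ (N + 1) - φ N] x) x
      ≤ dist (f^[φ N] (f^[φ (N + 1) - φ N] x)) (f^[φ N] x) := by
        simpa using (hf.iterate (φ N)).le_mul_dist _ _
    _ = dist (f^[φ (N + 1)] x) (f^[φ N] x) := by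
        rw [← iterate_add_apply, Nat.add_sub_cancel' hlt.le]
    _ < ε := hN (N + 1) N.le_succ

theorem denseRange [CompactSpace X] (hf : AntilipschitzWith 1 f) : DenseRange f := by
  refine Metric.denseRange_iff.mpr fun x ε hε => ?_
  obtain ⟨k, hk, hdist⟩ := hf.exists_dist_iterate_lt x hε
  obtain ⟨m, rfl⟩ := Nat.exists_eq_add_of_lt hk
  refine ⟨f^[m] x, ?_⟩
  rw [dist_comm, ← iterate_succ_apply' f m]
  simpa using hdist

end AntilipschitzWith

theorem LipschitzOnWith.eq_of_surjOn {X : Type*} [PseudoMetricSpace X] {f : X → X}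
    {s t : Set X} (hf : LipschitzOnWith 1 f s) (ht : IsCompact t) (hs : IsClosed s)
    (hst : s ⊆ t) (hsurj : SurjOn f s t) : s = t := by
  have := isCompact_iff_compactSpace.mp ht
  choose g hg_mem hg_inv using hsurj
  let G : t → t := fun y => ⟨g y.2, hst (hg_mem y.2)⟩
  have hG : AntilipschitzWith 1 G := AntilipschitzWith.of_le_mul_dist fun y y' => by
    simpa [G, Subtype.dist_eq, hg_inv y.2, hg_inv y'.2] using
      hf.dist_le_mul _ (hg_mem y.2) _ (hg_mem y'.2)
  have hrange : closure (range G) ⊆ Subtype.val ⁻¹' s :=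
    (hs.preimage continuous_subtype_val).closure_subset_iff.mpr
      (range_subset_iff.mpr fun y => hg_mem y.2)
  rw [hG.denseRange.closure_range] at hrange
  exact hst.antisymm fun y hy => hrange (mem_univ ⟨y, hy⟩)

section UnitVectors

variable {F : Type*} [NormedAddCommGroup F] [InnerProductSpace ℝ F] {x y x' y' : F}

theorem dist_le_dist_of_arccos_inner_le (hx : ‖x‖ = 1) (hy : ‖y‖ = 1) (hx' : ‖x'‖ = 1)
    (hy' : ‖y'‖ = 1) (h : arccos ⟪x', y'⟫ ≤ arccos ⟪x, y⟫) : dist x' y' ≤ dist x y := by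
  have hinner : ⟪x, y⟫ ≤ ⟪x', y'⟫ :=
    (strictAntiOn_arccos.le_iff_ge (real_inner_mem_Icc_of_norm_eq_one hx' hy')
      (real_inner_mem_Icc_of_norm_eq_one hx hy)).mp h
  rw [dist_eq_norm, dist_eq_norm, ← sq_le_sq₀ (norm_nonneg _) (norm_nonneg _),
    norm_sub_sq_real, norm_sub_sq_real, hx, hy, hx', hy']
  linarith

theorem eq_neg_of_arccos_inner_eq_pi (hx : ‖x‖ = 1) (hy : ‖y‖ = 1)
    (h : arccos ⟪x, y⟫ = π) : x = -y :=
  (inner_eq_neg_one_iff_of_norm_eq_one hx hy).mp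
    (le_antisymm (arccos_eq_pi.mp h) (neg_one_le_real_inner_of_norm_eq_one hx hy))

theorem arccos_inner_neg_self (hx : ‖x‖ = 1) : arccos ⟪x, -x⟫ = π := by
  rw [inner_neg_right, real_inner_self_eq_norm_sq, hx, one_pow, arccos_neg_one]

end UnitVectors

section Hemisphere

variable {n : ℕ}

theorem norm_eq_one_of_mem_upperHemi {x : Euc n} (hx : x ∈ upperHemi n) : ‖x‖ = 1 :=
  mem_sphere_zero_iff_norm.mp hx.1

theorem neg_mem_equator {x : Euc n} (hx : x ∈ equator n) : -x ∈ equator n := by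
  refine ⟨⟨?_, ?_⟩, ?_⟩
  · simpa [unitSphere] using hx.1.1
  · simp [hx.2]
  · simp [hx.2]

theorem isClosed_upperHemi : IsClosed (upperHemi n) :=
  Metric.isClosed_sphere.inter (isClosed_le continuous_const (EuclideanSpace.proj _).continuous)

theorem isClosed_equator : IsClosed (equator n) :=
  isClosed_upperHemi.inter (isClosed_eq (EuclideanSpace.proj _).continuous continuous_const)

theorem isCompact_equator : IsCompact (equator n) :=
  (isCompact_sphere 0 1).of_isClosed_subset isClosed_equator fun _ hx => hx.1.1

variable {T : Euc n → Euc n}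

theorem lipschitzOnWith_one_of_geod_le (hT_maps : ∀ x ∈ upperHemi n, T x ∈ upperHemi n)
    (hT_lip : ∀ x ∈ upperHemi n, ∀ y ∈ upperHemi n, geod (T x) (T y) ≤ geod x y) :
    LipschitzOnWith 1 T (upperHemi n) :=
  LipschitzOnWith.mk_one fun x hx y hy =>
    dist_le_dist_of_arccos_inner_le (norm_eq_one_of_mem_upperHemi hx)
      (norm_eq_one_of_mem_upperHemi hy) (norm_eq_one_of_mem_upperHemi (hT_maps x hx))
      (norm_eq_one_of_mem_upperHemi (hT_maps y hy)) (hT_lip x hx y hy)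

theorem mem_equator_of_map_mem_equator (hT_maps : ∀ x ∈ upperHemi n, T x ∈ upperHemi n)
    (hT_lip : ∀ x ∈ upperHemi n, ∀ y ∈ upperHemi n, geod (T x) (T y) ≤ geod x y)
    (hT_surj : ∀ y ∈ upperHemi n, ∃ x ∈ upperHemi n, T x = y) {x : Euc n}
    (hx : x ∈ upperHemi n) (hTx : T x ∈ equator n) : x ∈ equator n := by
  obtain ⟨z, hz, hTz⟩ := hT_surj _ (neg_mem_equator hTx).1
  have hxz : geod x z = π := by
    refine le_antisymm (arccos_le_pi _) ?_
    calc π = geod (T x) (T z) := by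
          rw [hTz, geod, arccos_inner_neg_self (norm_eq_one_of_mem_upperHemi (hT_maps x hx))]
      _ ≤ geod x z := hT_lip x hx z hz
  have hzx : x = -z := eq_neg_of_arccos_inner_eq_pi (norm_eq_one_of_mem_upperHemi hx)
    (norm_eq_one_of_mem_upperHemi hz) hxz
  have hx_last : x (Fin.last n) = -z (Fin.last n) := by rw [hzx]; rfl
  exact ⟨hx, by linarith [hx.2, hz.2]⟩

end Hemisphere

theorem stmt14_general (n : ℕ) (T : Euc n → Euc n)
    (hT_maps : ∀ x ∈ upperHemi n, T x ∈ upperHemi n)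
    (hT_surj : ∀ y ∈ upperHemi n, ∃ x ∈ upperHemi n, T x = y)
    (hT_lip : ∀ x ∈ upperHemi n, ∀ y ∈ upperHemi n, geod (T x) (T y) ≤ geod x y) :
    T '' equator n = equator n := by
  have hlip := lipschitzOnWith_one_of_geod_le hT_maps hT_lip
  set D := upperHemi n ∩ T ⁻¹' equator n
  have hD_closed : IsClosed D :=
    hlip.continuousOn.preimage_isClosed_of_isClosed isClosed_upperHemi isClosed_equator
  have hD_sub : D ⊆ equator n := fun x hx =>
    mem_equator_of_map_mem_equator hT_maps hT_lip hT_surj hx.1 hx.2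
  have hD_surj : SurjOn T D (equator n) := fun y hy =>
    let ⟨x, hx, hTx⟩ := hT_surj y hy.1
    ⟨x, ⟨hx, by rwa [mem_preimage, hTx]⟩, hTx⟩
  have hD_eq : D = equator n :=
    (hlip.mono inter_subset_left).eq_of_surjOn isCompact_equator hD_closed hD_sub hD_surj
  have hD_maps : T '' D ⊆ equator n := image_subset_iff.mpr inter_subset_right
  rw [hD_eq] at hD_maps hD_surj
  exact hD_maps.antisymm hD_surj

/-- A bijective `1`-Lipschitz map `T : S^n_+ → S^n_+` maps the equator onto
the equator. -/
theorem stmt14 (n : ℕ) (hn : 2 ≤ n) (T : Euc n → Euc n)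
    (hT_maps : ∀ x ∈ upperHemi n, T x ∈ upperHemi n)
    (hT_inj : Set.InjOn T (upperHemi n))
    (hT_surj : ∀ y ∈ upperHemi n, ∃ x ∈ upperHemi n, T x = y)
    (hT_lip : ∀ x ∈ upperHemi n, ∀ y ∈ upperHemi n, geod (T x) (T y) ≤ geod x y) :
    T '' equator n = equator n :=
  stmt14_general n T hT_maps hT_surj hT_lip

end
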